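/- Absence of three wave interactions for the dispersive part: Let α ∈ (0,1) ∪ (1,2). There exists a constant c > 0 such that for all j, k ∈ ℤ \ {0} with j + k ≠ 0 one has |ω̇_α(j+k) − ω̇_α(j) − ω̇_α(k)| ≥ c. -/
import Mathlib


/-- The constant `c_α = Γ(α/2)/(2^{1-α} Γ(1-α/2))`. -/
noncomputable def cc (α : ℝ) : ℝ :=
  Real.Gamma (α / 2) / (2 ^ (1 - α) * Real.Gamma (1 - α / 2))

/-- The constant `V_α`. -/
noncomputable def VV (α : ℝ) : ℝ :=
  cc α / (2 * (1 - α / 2)) * (1 / (1 - α)) *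
    (Real.Gamma (2 - α) / (Real.Gamma (1 - α / 2)) ^ 2)

/-- The constant `A_α`. -/
noncomputable def AA (α : ℝ) : ℝ :=
  cc α / (2 * (1 - α / 2)) * (1 / (1 - α)) *
    (Real.Gamma (3 - α) / (Real.Gamma (1 - α / 2) * Real.Gamma (α / 2)))

/-- The symbol `L_α(ξ) = V_α - A_α Γ(α/2+|ξ|)/Γ(1-α/2+|ξ|)`. -/
noncomputable def LL (α ξ : ℝ) : ℝ :=
  VV α - AA α * (Real.Gamma (α / 2 + |ξ|) / Real.Gamma (1 - α / 2 + |ξ|))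

/-- The dispersion relation `ω_α(ξ) = ξ L_α(ξ)`. -/
noncomputable def omegaSQG (α ξ : ℝ) : ℝ := ξ * LL α ξ

/-- The dispersive part `ω̇_α(ξ) = ω_α(ξ) - V_α ξ`. -/
noncomputable def omegaDot (α ξ : ℝ) : ℝ := omegaSQG α ξ - VV α * ξ

/-! ### Auxiliary definitions and lemmas -/

/-- `g(n) = Γ(α/2+n)/Γ(1-α/2+n)`. -/
noncomputable def gg (α : ℝ) (n : ℕ) : ℝ :=
  Real.Gamma (α / 2 + n) / Real.Gamma (1 - α / 2 + n)

/-- `F(n) = n g(n)`; the dispersive part at natural frequencies is `-A_α F`. -/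
noncomputable def FF (α : ℝ) (n : ℕ) : ℝ := n * gg α n

section aux

variable {α : ℝ}

lemma gg_pos (h0 : 0 < α) (h2 : α < 2) (n : ℕ) : 0 < gg α n := by
  have hn : (0 : ℝ) ≤ n := Nat.cast_nonneg n
  exact div_pos (Real.Gamma_pos_of_pos (by linarith)) (Real.Gamma_pos_of_pos (by linarith))

lemma gg_succ (h0 : 0 < α) (h2 : α < 2) (n : ℕ) :
    gg α (n + 1) = (α / 2 + n) / (1 - α / 2 + n) * gg α n := by
  have hn : (0 : ℝ) ≤ n := Nat.cast_nonneg n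
  have ha : α / 2 + (n : ℝ) ≠ 0 := by positivity
  have hb : 1 - α / 2 + (n : ℝ) ≠ 0 := ne_of_gt (by linarith)
  unfold gg
  push_cast
  rw [show α / 2 + ((n : ℝ) + 1) = (α / 2 + n) + 1 by ring,
    show (1 : ℝ) - α / 2 + ((n : ℝ) + 1) = (1 - α / 2 + n) + 1 by ring,
    Real.Gamma_add_one ha, Real.Gamma_add_one hb, mul_div_mul_comm]

lemma second_diff (h0 : 0 < α) (h2 : α < 2) (n : ℕ) :
    FF α (n + 2) - 2 * FF α (n + 1) + FF α n
      = gg α n * (α * (α - 1) * ((n : ℝ) + 1)) /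
        ((1 - α / 2 + (n : ℝ)) * (2 - α / 2 + (n : ℝ))) := by
  have hn : (0 : ℝ) ≤ n := Nat.cast_nonneg n
  have hb : (1 : ℝ) - α / 2 + (n : ℝ) ≠ 0 := ne_of_gt (by linarith)
  have hb1 : (2 : ℝ) - α / 2 + (n : ℝ) ≠ 0 := ne_of_gt (by linarith)
  have e1' : (1 - α / 2 + (n : ℝ)) * gg α (n + 1) = (α / 2 + (n : ℝ)) * gg α n := by
    rw [gg_succ h0 h2 n, ← mul_assoc, mul_div_cancel₀ _ hb]
  have e2' : ((1 - α / 2 + (n : ℝ)) * (2 - α / 2 + (n : ℝ))) * gg α (n + 2)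
      = ((α / 2 + (n : ℝ)) * (α / 2 + (n : ℝ) + 1)) * gg α n := by
    rw [show n + 2 = (n + 1) + 1 from rfl, gg_succ h0 h2 (n + 1), gg_succ h0 h2 n]
    push_cast
    rw [show (1 : ℝ) - α / 2 + ((n : ℝ) + 1) = 2 - α / 2 + (n : ℝ) by ring,
      show α / 2 + ((n : ℝ) + 1) = α / 2 + (n : ℝ) + 1 by ring]
    rw [show (1 - α / 2 + (n : ℝ)) * (2 - α / 2 + (n : ℝ)) *
          ((α / 2 + (n : ℝ) + 1) / (2 - α / 2 + (n : ℝ)) *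
            ((α / 2 + (n : ℝ)) / (1 - α / 2 + (n : ℝ)) * gg α n))
        = (2 - α / 2 + (n : ℝ)) * ((α / 2 + (n : ℝ) + 1) / (2 - α / 2 + (n : ℝ))) *
          ((1 - α / 2 + (n : ℝ)) * ((α / 2 + (n : ℝ)) / (1 - α / 2 + (n : ℝ)))) * gg α n
        by ring,
      mul_div_cancel₀ _ hb1, mul_div_cancel₀ _ hb]
    ring
  have hden : (1 - α / 2 + (n : ℝ)) * (2 - α / 2 + (n : ℝ)) ≠ 0 := mul_ne_zero hb hb1
  rw [eq_div_iff hden]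
  unfold FF
  push_cast
  linear_combination ((n : ℝ) + 2) * e2'
    - 2 * ((n : ℝ) + 1) * ((2 : ℝ) - α / 2 + (n : ℝ)) * e1'

lemma sdiff_pos (h0 : 0 < α) (h2 : α < 2) (h1 : α ≠ 1) (n : ℕ) :
    0 < (α - 1) * (FF α (n + 2) - 2 * FF α (n + 1) + FF α n) := by
  rw [second_diff h0 h2 n]
  have hn : (0 : ℝ) ≤ n := Nat.cast_nonneg n
  have hg := gg_pos h0 h2 n
  have hb : (0 : ℝ) < 1 - α / 2 + (n : ℝ) := by linarith
  have hb1 : (0 : ℝ) < 2 - α / 2 + (n : ℝ) := by linarith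
  have hne : α - 1 ≠ 0 := sub_ne_zero.mpr h1
  have hε : 0 < (α - 1) ^ 2 := sq_pos_of_ne_zero hne
  have key : (α - 1) * (gg α n * (α * (α - 1) * ((n : ℝ) + 1)) /
        ((1 - α / 2 + (n : ℝ)) * (2 - α / 2 + (n : ℝ))))
      = (α - 1) ^ 2 * (gg α n * (α * ((n : ℝ) + 1))) /
        ((1 - α / 2 + (n : ℝ)) * (2 - α / 2 + (n : ℝ))) := by ring
  rw [key]
  apply div_pos
  · exact mul_pos hε (mul_pos hg (mul_pos h0 (by linarith)))
  · exact mul_pos hb hb1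

lemma d_mono (h0 : 0 < α) (h2 : α < 2) (h1 : α ≠ 1) {n m : ℕ} (h : n ≤ m) :
    (α - 1) * (FF α (n + 1) - FF α n) ≤ (α - 1) * (FF α (m + 1) - FF α m) := by
  induction m, h using Nat.le_induction with
  | base => exact le_refl _
  | succ m hm ih =>
    have hs := sdiff_pos h0 h2 h1 m
    have hidx : m + 1 + 1 = m + 2 := by omega
    have hid : (α - 1) * (FF α (m + 2) - FF α (m + 1))
        = (α - 1) * (FF α (m + 1) - FF α m)
          + (α - 1) * (FF α (m + 2) - 2 * FF α (m + 1) + FF α m) := by ring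
    rw [hidx, hid]
    linarith

lemma gap_step (h0 : 0 < α) (h2 : α < 2) (h1 : α ≠ 1) (p q : ℕ) :
    (α - 1) * (FF α (p + q) - FF α p - FF α q)
      ≤ (α - 1) * (FF α (p + (q + 1)) - FF α p - FF α (q + 1)) := by
  have h := d_mono h0 h2 h1 (Nat.le_add_left q p)
  have hid : p + (q + 1) = (p + q) + 1 := by omega
  rw [hid]
  have e1 : (α - 1) * (FF α ((p + q) + 1) - FF α p - FF α (q + 1))
      = (α - 1) * (FF α (p + q) - FF α p - FF α q)
        + ((α - 1) * (FF α (p + q + 1) - FF α (p + q))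
          - (α - 1) * (FF α (q + 1) - FF α q)) := by ring
  rw [e1]
  linarith

lemma gap_lb (h0 : 0 < α) (h2 : α < 2) (h1 : α ≠ 1) (p q : ℕ) (hp : 1 ≤ p) (hq : 1 ≤ q) :
    (α - 1) * (FF α 2 - FF α 1 - FF α 1)
      ≤ (α - 1) * (FF α (p + q) - FF α p - FF α q) := by
  have mono : ∀ r s : ℕ, 1 ≤ s →
      (α - 1) * (FF α (r + 1) - FF α r - FF α 1)
        ≤ (α - 1) * (FF α (r + s) - FF α r - FF α s) := by
    intro r s hs
    induction s, hs using Nat.le_induction with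
    | base => exact le_refl _
    | succ s hs ih => exact le_trans ih (gap_step h0 h2 h1 r s)
  have h1p := mono 1 p hp
  have hpq := mono p q hq
  have e2 : (1 : ℕ) + 1 = 2 := rfl
  have e3 : (1 : ℕ) + p = p + 1 := by omega
  rw [e2, e3] at h1p
  calc (α - 1) * (FF α 2 - FF α 1 - FF α 1)
      ≤ (α - 1) * (FF α (p + 1) - FF α 1 - FF α p) := h1p
    _ = (α - 1) * (FF α (p + 1) - FF α p - FF α 1) := by ring
    _ ≤ (α - 1) * (FF α (p + q) - FF α p - FF α q) := hpq

lemma gap11_pos (h0 : 0 < α) (h2 : α < 2) (h1 : α ≠ 1) :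
    0 < (α - 1) * (FF α 2 - FF α 1 - FF α 1) := by
  have hs := sdiff_pos h0 h2 h1 0
  have hF0 : FF α 0 = 0 := by simp [FF]
  have e02 : (0 : ℕ) + 2 = 2 := rfl
  have e01 : (0 : ℕ) + 1 = 1 := rfl
  rw [e02, e01, hF0] at hs
  have e : (α - 1) * (FF α 2 - 2 * FF α 1 + 0)
      = (α - 1) * (FF α 2 - FF α 1 - FF α 1) := by ring
  rw [e] at hs
  exact hs

lemma AA_ne (h0 : 0 < α) (h2 : α < 2) (h1 : α ≠ 1) : AA α ≠ 0 := by
  have g1 : 0 < Real.Gamma (α / 2) := Real.Gamma_pos_of_pos (by linarith)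
  have g2 : 0 < Real.Gamma (1 - α / 2) := Real.Gamma_pos_of_pos (by linarith)
  have g3 : 0 < Real.Gamma (3 - α) := Real.Gamma_pos_of_pos (by linarith)
  have hc : 0 < cc α :=
    div_pos g1 (mul_pos (Real.rpow_pos_of_pos two_pos _) g2)
  have h1' : (1 : ℝ) - α ≠ 0 := sub_ne_zero.mpr (Ne.symm h1)
  have h2' : (2 : ℝ) * (1 - α / 2) ≠ 0 := ne_of_gt (by linarith)
  unfold AA
  exact mul_ne_zero (mul_ne_zero (div_ne_zero (ne_of_gt hc) h2') (one_div_ne_zero h1'))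
    (div_ne_zero (ne_of_gt g3) (ne_of_gt (mul_pos g2 g1)))

lemma omegaDot_natCast (m : ℕ) : omegaDot α (m : ℝ) = -(AA α * FF α m) := by
  have : |(m : ℝ)| = (m : ℝ) := abs_of_nonneg (Nat.cast_nonneg m)
  simp only [omegaDot, omegaSQG, LL, FF, gg, this]
  ring

lemma omegaDot_neg' (ξ : ℝ) : omegaDot α (-ξ) = -omegaDot α ξ := by
  simp only [omegaDot, omegaSQG, LL, abs_neg]
  ring

lemma omegaDot_int_pos {n : ℤ} (hn : 0 < n) :
    omegaDot α (n : ℝ) = -(AA α * FF α n.toNat) := by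
  have e : ((n.toNat : ℕ) : ℝ) = (n : ℝ) := by exact_mod_cast Int.toNat_of_nonneg hn.le
  rw [← e, omegaDot_natCast]

lemma omegaDot_int_neg {n : ℤ} (hn : n < 0) :
    omegaDot α (n : ℝ) = AA α * FF α (-n).toNat := by
  have e : ((((-n).toNat : ℕ)) : ℝ) = ((-n : ℤ) : ℝ) := by
    exact_mod_cast Int.toNat_of_nonneg (by omega : (0 : ℤ) ≤ -n)
  have e2 : (n : ℝ) = -(((-n).toNat : ℕ) : ℝ) := by rw [e]; push_cast; ring
  rw [e2, omegaDot_neg', omegaDot_natCast]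
  ring

lemma abs_le_abs_of_smul {ε x y : ℝ} (hy : 0 < ε * y) (hxy : ε * y ≤ ε * x) : |y| ≤ |x| := by
  rcases lt_trichotomy ε 0 with h | h | h
  · have hy' : y < 0 := by nlinarith
    have hx' : x ≤ y := by nlinarith
    rw [abs_of_neg hy', abs_of_neg (lt_of_le_of_lt hx' hy')]
    linarith
  · rw [h, zero_mul] at hy; exact absurd hy (lt_irrefl 0)
  · have hy' : 0 < y := by nlinarith
    have hx' : y ≤ x := le_of_mul_le_mul_left hxy h
    rw [abs_of_pos hy', abs_of_pos (lt_of_lt_of_le hy' hx')]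
    exact hx'

lemma interaction_abs (h0 : 0 < α) (h2 : α < 2) (j k : ℤ)
    (hj : j ≠ 0) (hk : k ≠ 0) (hjk : j + k ≠ 0) :
    ∃ p q : ℕ, 1 ≤ p ∧ 1 ≤ q ∧
      |omegaDot α ((j : ℝ) + (k : ℝ)) - omegaDot α (j : ℝ) - omegaDot α (k : ℝ)|
        = |AA α| * |FF α (p + q) - FF α p - FF α q| := by
  have ejk : (j : ℝ) + (k : ℝ) = ((j + k : ℤ) : ℝ) := by push_cast; ring
  rcases hj.lt_or_gt with hj' | hj' <;> rcases hk.lt_or_gt with hk' | hk'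
  · -- j < 0, k < 0 : j + k < 0
    refine ⟨(-j).toNat, (-k).toNat, by omega, by omega, ?_⟩
    have hs : j + k < 0 := by omega
    have e : (-(j + k)).toNat = (-j).toNat + (-k).toNat := by omega
    rw [ejk, omegaDot_int_neg hs, omegaDot_int_neg hj', omegaDot_int_neg hk', e,
      show AA α * FF α ((-j).toNat + (-k).toNat) - AA α * FF α (-j).toNat
          - AA α * FF α (-k).toNat
        = AA α * (FF α ((-j).toNat + (-k).toNat) - FF α (-j).toNat - FF α (-k).toNat) by ring,
      abs_mul]
  · -- j < 0, k > 0
    rcases hjk.lt_or_gt with hs | hs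
    · -- j + k < 0 : p = -(j+k), q = k, -j = p + q
      refine ⟨(-(j + k)).toNat, k.toNat, by omega, by omega, ?_⟩
      have e : (-j).toNat = (-(j + k)).toNat + k.toNat := by omega
      rw [ejk, omegaDot_int_neg hs, omegaDot_int_neg hj', omegaDot_int_pos hk', e,
        show AA α * FF α ((-(j + k)).toNat)
            - AA α * FF α ((-(j + k)).toNat + k.toNat) - -(AA α * FF α k.toNat)
          = -(AA α * (FF α ((-(j + k)).toNat + k.toNat)
              - FF α ((-(j + k)).toNat) - FF α k.toNat)) by ring,
        abs_neg, abs_mul]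
    · -- j + k > 0 : p = j+k, q = -j, k = p + q
      refine ⟨(j + k).toNat, (-j).toNat, by omega, by omega, ?_⟩
      have e : k.toNat = (j + k).toNat + (-j).toNat := by omega
      rw [ejk, omegaDot_int_pos hs, omegaDot_int_neg hj', omegaDot_int_pos hk', e,
        show -(AA α * FF α ((j + k).toNat)) - AA α * FF α (-j).toNat
            - -(AA α * FF α ((j + k).toNat + (-j).toNat))
          = AA α * (FF α ((j + k).toNat + (-j).toNat)
              - FF α ((j + k).toNat) - FF α (-j).toNat) by ring,
        abs_mul]
  · -- j > 0, k < 0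
    rcases hjk.lt_or_gt with hs | hs
    · -- j + k < 0 : p = -(j+k), q = j, -k = p + q
      refine ⟨(-(j + k)).toNat, j.toNat, by omega, by omega, ?_⟩
      have e : (-k).toNat = (-(j + k)).toNat + j.toNat := by omega
      rw [ejk, omegaDot_int_neg hs, omegaDot_int_pos hj', omegaDot_int_neg hk', e,
        show AA α * FF α ((-(j + k)).toNat) - -(AA α * FF α j.toNat)
            - AA α * FF α ((-(j + k)).toNat + j.toNat)
          = -(AA α * (FF α ((-(j + k)).toNat + j.toNat)
              - FF α ((-(j + k)).toNat) - FF α j.toNat)) by ring,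
        abs_neg, abs_mul]
    · -- j + k > 0 : p = j+k, q = -k, j = p + q
      refine ⟨(j + k).toNat, (-k).toNat, by omega, by omega, ?_⟩
      have e : j.toNat = (j + k).toNat + (-k).toNat := by omega
      rw [ejk, omegaDot_int_pos hs, omegaDot_int_pos hj', omegaDot_int_neg hk', e,
        show -(AA α * FF α ((j + k).toNat))
            - -(AA α * FF α ((j + k).toNat + (-k).toNat)) - AA α * FF α (-k).toNat
          = AA α * (FF α ((j + k).toNat + (-k).toNat)
              - FF α ((j + k).toNat) - FF α (-k).toNat) by ring,
        abs_mul]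
  · -- j > 0, k > 0 : j + k > 0
    refine ⟨j.toNat, k.toNat, by omega, by omega, ?_⟩
    have hs : 0 < j + k := by omega
    have e : (j + k).toNat = j.toNat + k.toNat := by omega
    rw [ejk, omegaDot_int_pos hs, omegaDot_int_pos hj', omegaDot_int_pos hk', e,
      show -(AA α * FF α (j.toNat + k.toNat)) - -(AA α * FF α j.toNat)
          - -(AA α * FF α k.toNat)
        = -(AA α * (FF α (j.toNat + k.toNat) - FF α j.toNat - FF α k.toNat)) by ring,
      abs_neg, abs_mul]

end aux

/-- Absence of three wave interactions for the dispersive part: there is `c > 0` such that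
for all nonzero integers `j, k` with `j + k ≠ 0` one has
`|ω̇_α(j+k) - ω̇_α(j) - ω̇_α(k)| ≥ c`. -/
theorem absence_of_three_wave_interactions_dispersive (α : ℝ)
    (hα : α ∈ Set.Ioo (0 : ℝ) 1 ∪ Set.Ioo (1 : ℝ) 2) :
    ∃ c : ℝ, 0 < c ∧
      ∀ j k : ℤ, j ≠ 0 → k ≠ 0 → j + k ≠ 0 →
        c ≤ |omegaDot α ((j : ℝ) + (k : ℝ)) - omegaDot α (j : ℝ) - omegaDot α (k : ℝ)| := by
  obtain ⟨h0, h2, h1⟩ : 0 < α ∧ α < 2 ∧ α ≠ 1 := by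
    rcases hα with ⟨ha, hb⟩ | ⟨ha, hb⟩
    · exact ⟨ha, by linarith, ne_of_lt hb⟩
    · exact ⟨by linarith, hb, ne_of_gt ha⟩
  have hG11 := gap11_pos h0 h2 h1
  have hG11ne : FF α 2 - FF α 1 - FF α 1 ≠ 0 := by
    intro h
    rw [h, mul_zero] at hG11
    exact lt_irrefl 0 hG11
  have hAne := AA_ne h0 h2 h1
  refine ⟨|AA α| * |FF α 2 - FF α 1 - FF α 1|,
    mul_pos (abs_pos.mpr hAne) (abs_pos.mpr hG11ne), ?_⟩
  intro j k hj hk hjk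
  obtain ⟨p, q, hp, hq, hD⟩ := interaction_abs h0 h2 j k hj hk hjk
  rw [hD]
  exact mul_le_mul_of_nonneg_left
    (abs_le_abs_of_smul hG11 (gap_lb h0 h2 h1 p q hp hq)) (abs_nonneg _)
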